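/- Let n ≥ 1, β > 0, let Q, K ∈ ℝ^{d×d} satisfy ‖QᵀK‖_op ≤ 1, and let 0 < δ < 1/(100 n² β²). Suppose Θ : [0,∞) → (S^{d−1})ⁿ is a C¹ curve satisfying the Post-LN dynamics θ̇ⱼ(t) = P_{θⱼ(t)} Aⱼ(Θ(t)) for all j and t, and suppose that ⟨θᵢ(t), θⱼ(t)⟩ ≥ 1 − δ for all i, j and all t ≥ 0. Then the variance 𝒱(t) = 1 − ‖θ̄(t)‖², where θ̄(t) = (1/n)∑_j θⱼ(t), satisfies for all t ≥ 0: 𝒱(0) e^{−(2 + √2/(3√n)) t} ≤ 𝒱(t) ≤ 𝒱(0) e^{−(2 − 2nδ − √2/(3√n)) t}. -/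

import Mathlib

open Filter Real
open scoped RealInnerProductSpace BigOperators

/-- Attention vector `A_j(Θ)` with parameters `Q, K`, value matrix `V = I_d`, and inverse
temperature `β`. -/
noncomputable def attnQK {d n : ℕ} (β : ℝ)
    (Q K : EuclideanSpace ℝ (Fin d) →L[ℝ] EuclideanSpace ℝ (Fin d))
    (θ : Fin n → EuclideanSpace ℝ (Fin d)) (j : Fin n) : EuclideanSpace ℝ (Fin d) :=
  (∑ l, Real.exp (β * ⟪Q (θ j), K (θ l)⟫))⁻¹ •
    ∑ k, Real.exp (β * ⟪Q (θ j), K (θ k)⟫) • θ k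

/-- Orthogonal projection onto the tangent space of the unit sphere at `θ`. -/
noncomputable def sphereProj {d : ℕ} (θ y : EuclideanSpace ℝ (Fin d)) :
    EuclideanSpace ℝ (Fin d) :=
  y - ⟪y, θ⟫ • θ


/-!
Write `m` for the mean of the `θⱼ`, so that `𝒱 = 1 - ‖m‖²` and
`𝒱' = -(2/n) ∑ⱼ ⟪m, P_{θⱼ} Aⱼ⟫`. In the cone all attention scores of a row lie within
`|β| √(2δ) < √2/(10n)` of each other, so every softmax weight is within
`ε = (exp (√2/(10n)) - 1)/n` of `1/n`, and `Aⱼ - m = ∑ₖ (wⱼₖ - 1/n) (θₖ - m)`. Splitting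
`⟪m, P_{θⱼ} Aⱼ⟫ = ‖P_{θⱼ} m‖² + ⟪Aⱼ - m, P_{θⱼ} m⟫`, the main terms sum to a quantity between
`n (1 - δ) 𝒱` (from `1 - δ ≤ ⟪m, θⱼ⟫ ≤ ‖m‖`) and `n 𝒱` (Cauchy–Schwarz), while the error terms
are bounded by `ε (∑ₖ ‖θₖ - m‖)² ≤ ε n² 𝒱` since `∑ₖ ‖θₖ - m‖² = n 𝒱`. As `εn ≤ √2/(6√n)`,
this gives `-(2 + √2/(3√n)) 𝒱 ≤ 𝒱' ≤ -(2 - 2nδ - √2/(3√n)) 𝒱`, and Grönwall integrates both.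
-/

lemma le_mul_exp_of_hasDerivAt_le {f f' : ℝ → ℝ} {r t : ℝ}
    (hf : ∀ s, 0 ≤ s → HasDerivAt f (f' s) s) (hle : ∀ s, 0 ≤ s → f' s ≤ r * f s)
    (ht : 0 ≤ t) : f t ≤ f 0 * exp (r * t) := by
  have hcont : ContinuousOn f (Set.Icc 0 t) :=
    fun s hs => (hf s hs.1).continuousAt.continuousWithinAt
  have key := le_gronwallBound_of_liminf_deriv_right_le (δ := f 0) (K := r) (ε := 0) hcont
    (fun s hs _ hr => (hf s hs.1).hasDerivWithinAt.liminf_right_slope_le hr) le_rfl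
    (fun s hs => by simpa using hle s hs.1) t ⟨ht, le_rfl⟩
  simpa [gronwallBound_ε0] using key

lemma mul_exp_le_of_le_hasDerivAt {f f' : ℝ → ℝ} {r t : ℝ}
    (hf : ∀ s, 0 ≤ s → HasDerivAt f (f' s) s) (hle : ∀ s, 0 ≤ s → r * f s ≤ f' s)
    (ht : 0 ≤ t) : f 0 * exp (r * t) ≤ f t := by
  simpa using le_mul_exp_of_hasDerivAt_le (f := -f) (f' := -f') (fun s hs => (hf s hs).neg)
    (fun s hs => by simpa using hle s hs) ht

section Softmax

variable {ι : Type*} [Fintype ι]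

noncomputable def softmax (b : ι → ℝ) (k : ι) : ℝ := exp (b k) / ∑ l, exp (b l)

lemma sum_softmax [Nonempty ι] (b : ι → ℝ) : ∑ k, softmax b k = 1 := by
  simp only [softmax]
  rw [← Finset.sum_div, div_self]
  exact (Finset.sum_pos (fun l _ => exp_pos (b l)) Finset.univ_nonempty).ne'

lemma abs_softmax_sub_inv_card_le [Nonempty ι] {b : ι → ℝ} {s : ℝ}
    (hs : ∀ k l, b k - b l ≤ s) (k : ι) :
    |softmax b k - (Fintype.card ι : ℝ)⁻¹| ≤ (exp s - 1) / Fintype.card ι := by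
  set N := (Fintype.card ι : ℝ)
  have hZ : 0 < ∑ l, exp (b l) := Finset.sum_pos (fun l _ => exp_pos (b l)) Finset.univ_nonempty
  have hN : 0 < N := Nat.cast_pos.2 Fintype.card_pos
  have hcard : N = ∑ _l : ι, (1 : ℝ) := by simp [N]
  have upper : exp (b k) / ∑ l, exp (b l) ≤ exp s / N := by
    rw [div_le_div_iff₀ hZ hN, hcard, Finset.mul_sum, Finset.mul_sum]
    refine Finset.sum_le_sum fun l _ => ?_
    rw [mul_one, ← exp_add]
    exact exp_le_exp.2 (by linarith [hs k l])
  have lower : exp (-s) / N ≤ exp (b k) / ∑ l, exp (b l) := by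
    rw [div_le_div_iff₀ hN hZ, hcard, Finset.mul_sum, Finset.mul_sum]
    refine Finset.sum_le_sum fun l _ => ?_
    rw [mul_one, ← exp_add]
    exact exp_le_exp.2 (by linarith [hs l k])
  have hes : (1 - exp (-s)) / N ≤ (exp s - 1) / N := by
    gcongr ?_ / _
    linarith [add_one_le_exp s, add_one_le_exp (-s)]
  rw [softmax, abs_sub_le_iff]
  constructor <;> linarith [show (exp s - 1) / N = exp s / N - N⁻¹ by ring,
    show (1 - exp (-s)) / N = N⁻¹ - exp (-s) / N by ring]

end Softmax

section Mean

variable {E ι : Type*} [NormedAddCommGroup E] [InnerProductSpace ℝ E] [Fintype ι]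
  {u : ι → E} {m : E}

lemma sum_inner_eq_card_mul_norm_sq (hm : ∑ i, u i = (Fintype.card ι : ℝ) • m) :
    ∑ i, ⟪m, u i⟫ = Fintype.card ι * ‖m‖ ^ 2 := by
  rw [← inner_sum, hm, real_inner_smul_right, real_inner_self_eq_norm_sq]

lemma le_inner_of_forall_le_inner [Nonempty ι] (hm : ∑ i, u i = (Fintype.card ι : ℝ) • m)
    {c : ℝ} {v : E} (h : ∀ i, c ≤ ⟪u i, v⟫) : c ≤ ⟪m, v⟫ := by
  have hN : (0 : ℝ) < Fintype.card ι := by exact_mod_cast Fintype.card_pos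
  refine le_of_mul_le_mul_left ?_ hN
  calc Fintype.card ι * c = ∑ _i : ι, c := by simp
    _ ≤ ∑ i, ⟪u i, v⟫ := Finset.sum_le_sum fun i _ => h i
    _ = Fintype.card ι * ⟪m, v⟫ := by rw [← sum_inner, hm, real_inner_smul_left]

lemma norm_le_one_of_sum_eq_smul [Nonempty ι] (hm : ∑ i, u i = (Fintype.card ι : ℝ) • m)
    (hu : ∀ i, ‖u i‖ = 1) : ‖m‖ ≤ 1 := by
  have hN : (0 : ℝ) < Fintype.card ι := by exact_mod_cast Fintype.card_pos
  refine le_of_mul_le_mul_left ?_ hN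
  calc Fintype.card ι * ‖m‖ = ‖∑ i, u i‖ := by rw [hm, norm_smul, norm_natCast]
    _ ≤ ∑ i, ‖u i‖ := norm_sum_le _ _
    _ = Fintype.card ι * 1 := by simp [hu]

lemma sum_norm_sub_sq_eq (hm : ∑ i, u i = (Fintype.card ι : ℝ) • m) (hu : ∀ i, ‖u i‖ = 1) :
    ∑ i, ‖u i - m‖ ^ 2 = Fintype.card ι * (1 - ‖m‖ ^ 2) := by
  simp only [norm_sub_sq_real, hu, real_inner_comm m, Finset.sum_add_distrib,
    Finset.sum_sub_distrib, ← Finset.mul_sum, sum_inner_eq_card_mul_norm_sq hm]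
  simp only [one_pow, Finset.sum_const, Finset.card_univ, nsmul_eq_mul, mul_one]
  ring

lemma sq_sum_norm_sub_le (hm : ∑ i, u i = (Fintype.card ι : ℝ) • m) (hu : ∀ i, ‖u i‖ = 1) :
    (∑ i, ‖u i - m‖) ^ 2 ≤ Fintype.card ι ^ 2 * (1 - ‖m‖ ^ 2) := by
  calc (∑ i, ‖u i - m‖) ^ 2 ≤ Fintype.card ι * ∑ i, ‖u i - m‖ ^ 2 := sq_sum_le_card_mul_sum_sq
    _ = Fintype.card ι ^ 2 * (1 - ‖m‖ ^ 2) := by rw [sum_norm_sub_sq_eq hm hu]; ring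

lemma sum_smul_sub_eq [Nonempty ι] (hm : ∑ i, u i = (Fintype.card ι : ℝ) • m) {w : ι → ℝ}
    (hw : ∑ i, w i = 1) :
    ∑ i, w i • u i - m = ∑ i, (w i - (Fintype.card ι : ℝ)⁻¹) • (u i - m) := by
  have hN : (Fintype.card ι : ℝ) ≠ 0 := by exact_mod_cast Fintype.card_ne_zero
  simp only [sub_smul, smul_sub, Finset.sum_sub_distrib, ← Finset.sum_smul, ← Finset.smul_sum,
    hw, hm, smul_smul, inv_mul_cancel₀ hN, Finset.sum_const, Finset.card_univ]
  rw [← Nat.cast_smul_eq_nsmul ℝ, smul_eq_mul, mul_inv_cancel₀ hN]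
  simp

lemma norm_sum_smul_sub_le [Nonempty ι] (hm : ∑ i, u i = (Fintype.card ι : ℝ) • m)
    {w : ι → ℝ} (hw : ∑ i, w i = 1) {ε : ℝ} (hε : ∀ i, |w i - (Fintype.card ι : ℝ)⁻¹| ≤ ε) :
    ‖∑ i, w i • u i - m‖ ≤ ε * ∑ i, ‖u i - m‖ := by
  rw [sum_smul_sub_eq hm hw, Finset.mul_sum]
  refine (norm_sum_le _ _).trans (Finset.sum_le_sum fun i _ => ?_)
  rw [norm_smul, Real.norm_eq_abs]
  exact mul_le_mul_of_nonneg_right (hε i) (norm_nonneg _)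

lemma sum_norm_sq_sub_inner_sq_le [Nonempty ι] (hm : ∑ i, u i = (Fintype.card ι : ℝ) • m)
    (hu : ∀ i, ‖u i‖ = 1) :
    ∑ i, (‖m‖ ^ 2 - ⟪m, u i⟫ ^ 2) ≤ Fintype.card ι * (1 - ‖m‖ ^ 2) := by
  have hN : (0 : ℝ) < Fintype.card ι := by exact_mod_cast Fintype.card_pos
  have hm1 : ‖m‖ ^ 2 ≤ 1 := pow_le_one₀ (norm_nonneg m) (norm_le_one_of_sum_eq_smul hm hu)
  have hCS : Fintype.card ι * (‖m‖ ^ 2) ^ 2 ≤ ∑ i, ⟪m, u i⟫ ^ 2 := by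
    have h := sq_sum_le_card_mul_sum_sq (s := Finset.univ) (f := fun i => ⟪m, u i⟫)
    rw [sum_inner_eq_card_mul_norm_sq hm, Finset.card_univ] at h
    exact le_of_mul_le_mul_left (by linarith) hN
  rw [Finset.sum_sub_distrib, Finset.sum_const, Finset.card_univ, nsmul_eq_mul]
  nlinarith [mul_nonneg hN.le (mul_nonneg (sub_nonneg.2 hm1) (sub_nonneg.2 hm1))]

lemma le_sum_norm_sq_sub_inner_sq [Nonempty ι] (hm : ∑ i, u i = (Fintype.card ι : ℝ) • m)
    (hu : ∀ i, ‖u i‖ = 1) {δ : ℝ} (hcone : ∀ i, 1 - δ ≤ ⟪m, u i⟫) :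
    Fintype.card ι * (1 - δ) * (1 - ‖m‖ ^ 2) ≤ ∑ i, (‖m‖ ^ 2 - ⟪m, u i⟫ ^ 2) := by
  have hN : (0 : ℝ) < Fintype.card ι := by exact_mod_cast Fintype.card_pos
  have hm1 : ‖m‖ ≤ 1 := norm_le_one_of_sum_eq_smul hm hu
  have hmδ : 1 - δ ≤ ‖m‖ ^ 2 := by
    rw [← real_inner_self_eq_norm_sq]
    exact le_inner_of_forall_le_inner hm fun i => real_inner_comm m (u i) ▸ hcone i
  have hle : ∀ i, ⟪m, u i⟫ ≤ ‖m‖ := fun i => by simpa [hu i] using real_inner_le_norm m (u i)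
  calc Fintype.card ι * (1 - δ) * (1 - ‖m‖ ^ 2)
      ≤ (‖m‖ + 1 - δ) * (Fintype.card ι * ‖m‖ - Fintype.card ι * ‖m‖ ^ 2) := by
        nlinarith [mul_nonneg (mul_nonneg hN.le (sub_nonneg.2 hm1)) (sub_nonneg.2 hmδ)]
    _ = ∑ i, (‖m‖ - ⟪m, u i⟫) * (‖m‖ + 1 - δ) := by
        rw [← Finset.sum_mul, Finset.sum_sub_distrib, sum_inner_eq_card_mul_norm_sq hm]
        simp only [Finset.sum_const, Finset.card_univ, nsmul_eq_mul]
        ring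
    _ ≤ ∑ i, (‖m‖ ^ 2 - ⟪m, u i⟫ ^ 2) := Finset.sum_le_sum fun i _ => by
        nlinarith [mul_le_mul_of_nonneg_left (hcone i) (sub_nonneg.2 (hle i))]

end Mean

section SphereProj

variable {d : ℕ}

lemma inner_sphereProj_eq (m u a : EuclideanSpace ℝ (Fin d)) :
    ⟪m, sphereProj u a⟫ = ‖m‖ ^ 2 - ⟪m, u⟫ ^ 2 + ⟪a - m, sphereProj u m⟫ := by
  simp only [sphereProj, inner_sub_left, inner_sub_right, real_inner_smul_right,
    real_inner_self_eq_norm_sq, real_inner_comm m a, real_inner_comm u a, real_inner_comm u m]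
  ring

lemma norm_sphereProj_le_norm_sub {u : EuclideanSpace ℝ (Fin d)} (hu : ‖u‖ = 1)
    (x : EuclideanSpace ℝ (Fin d)) : ‖sphereProj u x‖ ≤ ‖x - u‖ := by
  have hsq : ‖x - u‖ ^ 2 - ‖sphereProj u x‖ ^ 2 = (1 - ⟪x, u⟫) ^ 2 := by
    rw [sphereProj, norm_sub_sq_real, norm_sub_sq_real, norm_smul, real_inner_smul_right,
      hu, Real.norm_eq_abs, mul_pow, sq_abs]
    ring
  exact pow_le_pow_iff_left₀ (norm_nonneg _) (norm_nonneg _) two_ne_zero |>.1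
    (by nlinarith [sq_nonneg (1 - ⟪x, u⟫)])

variable {ι : Type*} [Fintype ι] {u : ι → EuclideanSpace ℝ (Fin d)} {m : EuclideanSpace ℝ (Fin d)}

lemma abs_sum_inner_sub_sphereProj_le (hu : ∀ i, ‖u i‖ = 1)
    {a : ι → EuclideanSpace ℝ (Fin d)} {ε : ℝ} (hε : 0 ≤ ε)
    (ha : ∀ j, ‖a j - m‖ ≤ ε * ∑ k, ‖u k - m‖) :
    |∑ j, ⟪a j - m, sphereProj (u j) m⟫| ≤ ε * (∑ k, ‖u k - m‖) ^ 2 := by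
  calc |∑ j, ⟪a j - m, sphereProj (u j) m⟫| ≤ ∑ j, |⟪a j - m, sphereProj (u j) m⟫| :=
        Finset.abs_sum_le_sum_abs _ _
    _ ≤ ∑ j, (ε * ∑ k, ‖u k - m‖) * ‖u j - m‖ := Finset.sum_le_sum fun j _ => by
        refine (abs_real_inner_le_norm _ _).trans (mul_le_mul (ha j) ?_ (norm_nonneg _)
          (by positivity))
        simpa [norm_sub_rev] using norm_sphereProj_le_norm_sub (hu j) m
    _ = ε * (∑ k, ‖u k - m‖) ^ 2 := by rw [← Finset.mul_sum]; ring

lemma sum_inner_sphereProj_bounds [Nonempty ι] (hm : ∑ i, u i = (Fintype.card ι : ℝ) • m)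
    (hu : ∀ i, ‖u i‖ = 1) {δ : ℝ} (hcone : ∀ i, 1 - δ ≤ ⟪m, u i⟫)
    {a : ι → EuclideanSpace ℝ (Fin d)} {ε : ℝ} (hε : 0 ≤ ε)
    (ha : ∀ j, ‖a j - m‖ ≤ ε * ∑ k, ‖u k - m‖) :
    Fintype.card ι * (1 - δ - ε * Fintype.card ι) * (1 - ‖m‖ ^ 2) ≤
        ∑ j, ⟪m, sphereProj (u j) (a j)⟫ ∧
      ∑ j, ⟪m, sphereProj (u j) (a j)⟫ ≤
        Fintype.card ι * (1 + ε * Fintype.card ι) * (1 - ‖m‖ ^ 2) := by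
  simp only [inner_sphereProj_eq m, Finset.sum_add_distrib]
  have hR := abs_le.1 <| (abs_sum_inner_sub_sphereProj_le hu hε ha).trans
    (mul_le_mul_of_nonneg_left (sq_sum_norm_sub_le hm hu) hε)
  have hlow := le_sum_norm_sq_sub_inner_sq hm hu hcone
  have hup := sum_norm_sq_sub_inner_sq_le hm hu
  constructor <;> linarith

end SphereProj

lemma exp_sqrt_two_div_sub_one_le {n : ℝ} (hn : 1 ≤ n) :
    exp (√2 / (10 * n)) - 1 ≤ √2 / (6 * √n) := by
  set s := √2 / (10 * n) with hs
  have hsqrt2 : √2 ≤ 3 / 2 := by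
    rw [sqrt_le_left (by norm_num)]; norm_num
  have hs0 : 0 ≤ s := by positivity
  have hs1 : s ≤ 3 / 20 := by
    rw [hs, div_le_iff₀ (by positivity)]; nlinarith
  have hexp : exp s - 1 ≤ s + s ^ 2 := by
    have := abs_exp_sub_one_sub_id_le (x := s) (by rw [abs_of_nonneg hs0]; linarith)
    linarith [le_abs_self (exp s - 1 - s)]
  have hsqrtn : 1 ≤ √n := by rw [le_sqrt zero_le_one (by linarith)]; linarith
  have hrhs : √2 / (6 * √n) = 5 / 3 * √n * s := by
    have : 0 < √n := by linarith
    rw [hs]; field_simp; rw [sq_sqrt (by linarith)]; ring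
  rw [hrhs]
  nlinarith

lemma abs_mul_norm_sub_le {E : Type*} [NormedAddCommGroup E] [InnerProductSpace ℝ E]
    {n β δ : ℝ} (hn : 0 < n) (hδ' : δ < 1 / (100 * n ^ 2 * β ^ 2)) {x y : E} (hx : ‖x‖ = 1)
    (hy : ‖y‖ = 1) (hxy : 1 - δ ≤ ⟪x, y⟫) : |β| * ‖x - y‖ ≤ √2 / (10 * n) := by
  refine pow_le_pow_iff_left₀ (by positivity) (by positivity) two_ne_zero |>.1 ?_
  have hxy' : ‖x - y‖ ^ 2 ≤ 2 * δ := by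
    rw [norm_sub_sq_real, hx, hy]; linarith
  have hβδ : β ^ 2 * δ ≤ 1 / (100 * n ^ 2) := by
    rcases eq_or_ne β 0 with rfl | hβ
    · simp; positivity
    rw [lt_div_iff₀ (by positivity)] at hδ'
    rw [le_div_iff₀ (by positivity)]; linarith
  calc (|β| * ‖x - y‖) ^ 2 = β ^ 2 * ‖x - y‖ ^ 2 := by rw [mul_pow, sq_abs]
    _ ≤ β ^ 2 * (2 * δ) := by gcongr
    _ = 2 * (β ^ 2 * δ) := by ring
    _ ≤ 2 * (1 / (100 * n ^ 2)) := by gcongr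
    _ = (√2 / (10 * n)) ^ 2 := by rw [div_pow, sq_sqrt zero_le_two]; ring

section Attention

variable {d n : ℕ} {Q K : EuclideanSpace ℝ (Fin d) →L[ℝ] EuclideanSpace ℝ (Fin d)}

lemma attnQK_eq_sum_softmax_smul (β : ℝ) (u : Fin n → EuclideanSpace ℝ (Fin d)) (j : Fin n) :
    attnQK β Q K u j = ∑ k, softmax (fun k => β * ⟪Q (u j), K (u k)⟫) k • u k := by
  simp only [attnQK, softmax, Finset.smul_sum, smul_smul, div_eq_inv_mul]

lemma attn_score_sub_le (hQK : ‖(ContinuousLinearMap.adjoint Q).comp K‖ ≤ 1) (β : ℝ)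
    {v : EuclideanSpace ℝ (Fin d)} (hv : ‖v‖ ≤ 1) (x y : EuclideanSpace ℝ (Fin d)) :
    β * ⟪Q v, K x⟫ - β * ⟪Q v, K y⟫ ≤ |β| * ‖x - y‖ := by
  have hM : β * ⟪Q v, K x⟫ - β * ⟪Q v, K y⟫ =
      β * ⟪v, (ContinuousLinearMap.adjoint Q).comp K (x - y)⟫ := by
    rw [ContinuousLinearMap.comp_apply, ContinuousLinearMap.adjoint_inner_right, map_sub,
      inner_sub_right, mul_sub]
  have hnorm : ‖(ContinuousLinearMap.adjoint Q).comp K (x - y)‖ ≤ ‖x - y‖ :=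
    ((ContinuousLinearMap.le_opNorm _ _).trans
      (mul_le_of_le_one_left (norm_nonneg _) hQK))
  rw [hM]
  calc β * ⟪v, (ContinuousLinearMap.adjoint Q).comp K (x - y)⟫
      ≤ |β| * |⟪v, (ContinuousLinearMap.adjoint Q).comp K (x - y)⟫| := by
        rw [← abs_mul]; exact le_abs_self _
    _ ≤ |β| * ‖x - y‖ := by
        gcongr
        exact (abs_real_inner_le_norm _ _).trans
          ((mul_le_mul hv hnorm (norm_nonneg _) zero_le_one).trans_eq (one_mul _))

lemma norm_attnQK_sub_le (hn : 1 ≤ n) {β δ : ℝ}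
    (hQK : ‖(ContinuousLinearMap.adjoint Q).comp K‖ ≤ 1) (hδ' : δ < 1 / (100 * n ^ 2 * β ^ 2))
    {u : Fin n → EuclideanSpace ℝ (Fin d)} (hu : ∀ j, ‖u j‖ = 1)
    (hcone : ∀ i j, 1 - δ ≤ ⟪u i, u j⟫) {m : EuclideanSpace ℝ (Fin d)}
    (hm : ∑ j, u j = (n : ℝ) • m) (j : Fin n) :
    ‖attnQK β Q K u j - m‖ ≤ (exp (√2 / (10 * n)) - 1) / n * ∑ k, ‖u k - m‖ := by
  have : Nonempty (Fin n) := ⟨⟨0, hn⟩⟩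
  rw [attnQK_eq_sum_softmax_smul]
  refine norm_sum_smul_sub_le (by rwa [Fintype.card_fin]) (sum_softmax _) fun k => ?_
  simpa using abs_softmax_sub_inv_card_le (fun k l =>
    (attn_score_sub_le hQK β (hu j).le (u k) (u l)).trans
      (abs_mul_norm_sub_le (by positivity) hδ' (hu k) (hu l) (hcone k l))) k

end Attention

lemma variance_drift_bounds {d n : ℕ} (hn : 1 ≤ n) {β δ : ℝ}
    {Q K : EuclideanSpace ℝ (Fin d) →L[ℝ] EuclideanSpace ℝ (Fin d)}
    (hQK : ‖(ContinuousLinearMap.adjoint Q).comp K‖ ≤ 1)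
    (hδ : 0 ≤ δ) (hδ' : δ < 1 / (100 * n ^ 2 * β ^ 2))
    {u : Fin n → EuclideanSpace ℝ (Fin d)} (hu : ∀ j, ‖u j‖ = 1)
    (hcone : ∀ i j, 1 - δ ≤ ⟪u i, u j⟫) {m : EuclideanSpace ℝ (Fin d)}
    (hm : ∑ j, u j = (n : ℝ) • m) :
    (2 - 2 * n * δ - √2 / (3 * √n)) * (1 - ‖m‖ ^ 2) ≤
        2 * ⟪m, (n : ℝ)⁻¹ • ∑ j, sphereProj (u j) (attnQK β Q K u j)⟫ ∧
      2 * ⟪m, (n : ℝ)⁻¹ • ∑ j, sphereProj (u j) (attnQK β Q K u j)⟫ ≤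
        (2 + √2 / (3 * √n)) * (1 - ‖m‖ ^ 2) := by
  have : Nonempty (Fin n) := ⟨⟨0, hn⟩⟩
  have hn1 : (1 : ℝ) ≤ n := by exact_mod_cast hn
  have hm' : ∑ j, u j = (Fintype.card (Fin n) : ℝ) • m := by rwa [Fintype.card_fin]
  set ε := (exp (√2 / (10 * n)) - 1) / n
  have hε : 0 ≤ ε := div_nonneg
    (by linarith [add_one_le_exp (√2 / (10 * n)), show 0 ≤ √2 / (10 * n) by positivity])
    (by positivity)
  have hεn : ε * n ≤ √2 / (6 * √n) := by
    rw [div_mul_cancel₀ _ (by positivity)]; exact exp_sqrt_two_div_sub_one_le hn1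
  obtain ⟨hlow, hup⟩ := sum_inner_sphereProj_bounds hm' hu
    (fun i => le_inner_of_forall_le_inner hm' fun k => hcone k i) hε
    (norm_attnQK_sub_le hn hQK hδ' hu hcone hm)
  simp only [Fintype.card_fin] at hlow hup
  have hV : 0 ≤ 1 - ‖m‖ ^ 2 := sub_nonneg.2 <|
    pow_le_one₀ (norm_nonneg m) (norm_le_one_of_sum_eq_smul hm' hu)
  have hc : √2 / (3 * √n) = 2 * (√2 / (6 * √n)) := by ring
  rw [real_inner_smul_right, inner_sum, hc]
  constructor
  · calc (2 - 2 * n * δ - 2 * (√2 / (6 * √n))) * (1 - ‖m‖ ^ 2)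
        ≤ 2 * (1 - δ - ε * n) * (1 - ‖m‖ ^ 2) := by
          gcongr; nlinarith [mul_nonneg (sub_nonneg.2 hn1) hδ]
      _ = 2 * ((n : ℝ)⁻¹ * (n * (1 - δ - ε * n) * (1 - ‖m‖ ^ 2))) := by field_simp
      _ ≤ _ := by gcongr
  · calc 2 * ((n : ℝ)⁻¹ * ∑ j, ⟪m, sphereProj (u j) (attnQK β Q K u j)⟫)
        ≤ 2 * ((n : ℝ)⁻¹ * (n * (1 + ε * n) * (1 - ‖m‖ ^ 2))) := by gcongr
      _ = 2 * (1 + ε * n) * (1 - ‖m‖ ^ 2) := by field_simp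
      _ ≤ (2 + 2 * (√2 / (6 * √n))) * (1 - ‖m‖ ^ 2) := by gcongr; linarith

theorem postLN_variance_decay_general (d n : ℕ) (hn : 1 ≤ n) (β : ℝ)
    (Q K : EuclideanSpace ℝ (Fin d) →L[ℝ] EuclideanSpace ℝ (Fin d))
    (hQK : ‖(ContinuousLinearMap.adjoint Q).comp K‖ ≤ 1)
    (δ : ℝ) (hδ : 0 < δ) (hδ' : δ < 1 / (100 * n ^ 2 * β ^ 2))
    (θ : ℝ → Fin n → EuclideanSpace ℝ (Fin d))
    (hnorm : ∀ t, 0 ≤ t → ∀ j, ‖θ t j‖ = 1)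
    (hdyn : ∀ t, 0 ≤ t → ∀ j, HasDerivAt (fun s => θ s j)
      (sphereProj (θ t j) (attnQK β Q K (θ t) j)) t)
    (hcone : ∀ t, 0 ≤ t → ∀ i j : Fin n, 1 - δ ≤ ⟪θ t i, θ t j⟫)
    (V : ℝ → ℝ) (hV : ∀ t, V t = 1 - ‖(n : ℝ)⁻¹ • ∑ j, θ t j‖ ^ 2) :
    ∀ t, 0 ≤ t →
      V 0 * Real.exp (-(2 + Real.sqrt 2 / (3 * Real.sqrt n)) * t) ≤ V t ∧
      V t ≤ V 0 * Real.exp (-(2 - 2 * n * δ - Real.sqrt 2 / (3 * Real.sqrt n)) * t) := by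
  have hn0 : (n : ℝ) ≠ 0 := by positivity
  have hderiv : ∀ s, 0 ≤ s → HasDerivAt V (-(2 * ⟪(n : ℝ)⁻¹ • ∑ j, θ s j,
      (n : ℝ)⁻¹ • ∑ j, sphereProj (θ s j) (attnQK β Q K (θ s) j)⟫)) s := fun s hs => by
    rw [funext hV]
    exact ((HasDerivAt.fun_sum fun j _ => hdyn s hs j).const_smul (n : ℝ)⁻¹).norm_sq.const_sub 1
  have hdrift := fun s (hs : 0 ≤ s) => variance_drift_bounds hn hQK hδ.le hδ' (hnorm s hs)
    (hcone s hs) (smul_inv_smul₀ hn0 (∑ j, θ s j)).symm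
  intro t ht
  refine ⟨mul_exp_le_of_le_hasDerivAt hderiv (fun s hs => ?_) ht,
    le_mul_exp_of_hasDerivAt_le hderiv (fun s hs => ?_) ht⟩
  · rw [hV]; linarith [(hdrift s hs).2]
  · rw [hV]; linarith [(hdrift s hs).1]

/-- exponential variance decay for Post-LN in a local cone. -/
theorem postLN_variance_decay (d n : ℕ) (hn : 1 ≤ n) (β : ℝ) (hβ : 0 < β)
    (Q K : EuclideanSpace ℝ (Fin d) →L[ℝ] EuclideanSpace ℝ (Fin d))
    (hQK : ‖(ContinuousLinearMap.adjoint Q).comp K‖ ≤ 1)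
    (δ : ℝ) (hδ : 0 < δ) (hδ' : δ < 1 / (100 * n ^ 2 * β ^ 2))
    (θ : ℝ → Fin n → EuclideanSpace ℝ (Fin d))
    (hnorm : ∀ t, 0 ≤ t → ∀ j, ‖θ t j‖ = 1)
    (hdyn : ∀ t, 0 ≤ t → ∀ j, HasDerivAt (fun s => θ s j)
      (sphereProj (θ t j) (attnQK β Q K (θ t) j)) t)
    (hcone : ∀ t, 0 ≤ t → ∀ i j : Fin n, 1 - δ ≤ ⟪θ t i, θ t j⟫)
    (V : ℝ → ℝ) (hV : ∀ t, V t = 1 - ‖(n : ℝ)⁻¹ • ∑ j, θ t j‖ ^ 2) :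
    ∀ t, 0 ≤ t →
      V 0 * Real.exp (-(2 + Real.sqrt 2 / (3 * Real.sqrt n)) * t) ≤ V t ∧
      V t ≤ V 0 * Real.exp (-(2 - 2 * n * δ - Real.sqrt 2 / (3 * Real.sqrt n)) * t) :=
  postLN_variance_decay_general d n hn β Q K hQK δ hδ hδ' θ hnorm hdyn hcone V hV
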